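/- arXiv:math/0106244 — 3 statements merged into one kernel-verified Lean document; each statement's English description precedes it below -/
import Mathlib

section
/- Let M_n be the free k-vector space on the set of isomorphism classes of rooted trees with vertices labeled by {1,…,n}, equipped with the grafting product s ⋆ t = Σ_{v ∈ t} s ∘_v t (grafting s onto each vertex v of t by a new edge, preserving all vertex labels); this is the free pre-Lie algebra on n generators (Chapoton–Livernet). Let L_n be the free k-vector space on the set of isomorphism classes of nonempty n-edge-colored rooted trees with the grafting product D_s *' D_t = Σ_{v ∈ t} Σ_{p=1}^n D_{s ∘_v^p t}. Define ψ : L_n → M_n by ψ(D_t) = Σ_{i=1}^n t_i, where t_i is the vertex-labeled rooted tree obtained from the edge-colored tree t by labeling each non-root vertex with the color of the edge joining it to the vertex directly below it, and labeling the root with i. Then ψ is an injective linear map satisfying ψ(D_s *' D_t) = ψ(D_s) ⋆ ψ(D_t), and its image is the span of all sums Σ_{i=1}^n t_i of labeled trees t_1,…,t_n that differ only in the label of the root, where the root of t_i is labeled i. -/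
/- Core combinatorics of n-edge-colored rooted forests.

A forest is encoded by a finite set of vertices (natural numbers), a
parent function (pointing one step towards the root) and a coloring
function assigning to each non-root vertex the color of the edge
connecting it to its parent.  Well-formedness (`WF`) asks that the parent
function is supported on the vertex set and is acyclic. -/

open scoped Classical

noncomputable section

structure PForest (n : ℕ) where
  verts : Finset ℕ
  parent : ℕ → Option ℕ
  color : ℕ → Fin n

namespace PForest

variable {n : ℕ}

/-- well-formedness: edges join vertices, and the parent relation is
acyclic. -/
def WF (t : PForest n) : Prop :=
  (∀ v w : ℕ, t.parent v = some w → v ∈ t.verts ∧ w ∈ t.verts) ∧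
    ∃ rk : ℕ → ℕ, ∀ v w : ℕ, t.parent v = some w → rk w < rk v

/-- one step towards the root: `w` is the parent of `v`. -/
def Step (t : PForest n) (v w : ℕ) : Prop := t.parent v = some w

/-- `w` lies (weakly) on the path from `v` to the root of its component. -/
def Anc (t : PForest n) (v w : ℕ) : Prop := Relation.ReflTransGen t.Step v w

def nearestAncAux (t : PForest n) (S : Finset ℕ) : ℕ → ℕ → Option ℕ
  | 0, _ => none
  | fuel + 1, v =>
    match t.parent v with
    | none => none
    | some w => if w ∈ S then some w else nearestAncAux t S fuel w

/-- the first vertex of `S` strictly below `v`; this is the parent of `v`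
in the subforest induced on `S`. -/
def nearestAnc (t : PForest n) (S : Finset ℕ) (v : ℕ) : Option ℕ :=
  nearestAncAux t S t.verts.card v

def lastBeforeAux (t : PForest n) (S : Finset ℕ) : ℕ → ℕ → ℕ
  | 0, v => v
  | fuel + 1, v =>
    match t.parent v with
    | none => v
    | some w => if w ∈ S then v else lastBeforeAux t S fuel w

/-- the last vertex on the path from `v` down to `nearestAnc t S v`
before reaching it; the color of the edge of the induced subforest below
`v` is the (ambient) color of this vertex. -/
def lastBefore (t : PForest n) (S : Finset ℕ) (v : ℕ) : ℕ :=
  lastBeforeAux t S t.verts.card v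

/-- `pcount t S s j v` is the number of edges of (induced) color `j` on
the path from `v` to the root of its component in the subforest of `t`
induced on `S`, whose lower vertex lies outside `s`.  (Edges of the
induced subforest are indexed by their upper vertex `x`; the lower vertex
is `nearestAnc t S x` and the induced color is the ambient color of
`lastBefore t S x`.) -/
def pcount (t : PForest n) (S s : Finset ℕ) (j : Fin n) (v : ℕ) : ℕ :=
  (S.filter fun x => t.Anc v x ∧ t.color (t.lastBefore S x) = j ∧
      ∃ w, t.nearestAnc S x = some w ∧ w ∉ s).card

/-- the subforest of `u` induced on `S`, as a forest in its own right. -/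
def restrict (u : PForest n) (S : Finset ℕ) : PForest n where
  verts := S ∩ u.verts
  parent := fun v => if v ∈ S ∩ u.verts then u.nearestAnc S v else none
  color := fun v => u.color (u.lastBefore S v)

/-- a forest is a (nonempty) tree when it has exactly one root. -/
def IsTree (t : PForest n) : Prop :=
  (t.verts.filter fun v => t.parent v = none).card = 1

/-- `e` is an isomorphism of n-colored forests from `s` to `t`: a
bijection of the vertices preserving the parent relation and the colors
of edges. -/
def IsIsoFn (s t : PForest n) (e : {x // x ∈ s.verts} ≃ {x // x ∈ t.verts}) : Prop :=
  (∀ v w : {x // x ∈ s.verts},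
      s.parent (v : ℕ) = some (w : ℕ) ↔ t.parent ((e v : ℕ)) = some ((e w : ℕ))) ∧
    ∀ v : {x // x ∈ s.verts}, (s.parent (v : ℕ)).isSome →
      t.color ((e v : ℕ)) = s.color (v : ℕ)

/-- isomorphism of n-colored forests. -/
def PIso (s t : PForest n) : Prop := ∃ e, IsIsoFn s t e

end PForest

/-- a (well-formed, nonempty) n-colored rooted tree. -/
def TreeObj (n : ℕ) : Type := {t : PForest n // t.WF ∧ t.IsTree}

/-- isomorphism classes of n-colored rooted trees. -/
def TreeClass (n : ℕ) : Type := Quot fun a b : TreeObj n => PForest.PIso a.1 b.1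

/-- the one-vertex tree. -/
def unitTree (n : ℕ) [NeZero n] : PForest n :=
  ⟨{0}, fun _ => none, fun _ => 0⟩

theorem unitTree_wf (n : ℕ) [NeZero n] : (unitTree n).WF :=
  ⟨fun v w h => by simp [unitTree] at h, ⟨id, fun v w h => by simp [unitTree] at h⟩⟩

theorem unitTree_isTree (n : ℕ) [NeZero n] : (unitTree n).IsTree := by
  simp [PForest.IsTree, unitTree]

def defaultTreeObj (n : ℕ) [NeZero n] : TreeObj n :=
  ⟨unitTree n, unitTree_wf n, unitTree_isTree n⟩

/-- the isomorphism class of a tree (junk value: the class of the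
one-vertex tree, if the given forest is not a well-formed tree). -/
def mkClass {n : ℕ} [NeZero n] (t : PForest n) : TreeClass n :=
  if h : t.WF ∧ t.IsTree then Quot.mk _ (⟨t, h⟩ : TreeObj n)
  else Quot.mk _ (defaultTreeObj n)

end

noncomputable section

namespace PForest

variable {n : ℕ}

/-- grafting of s onto the vertex v of t by an edge of color p: the
disjoint union of s and t (t relabelled by doubling, s by doubling plus
one) with one new edge, of color p, joining the root of s to v. -/
def graft (s t : PForest n) (v : ℕ) (p : Fin n) : PForest n where
  verts := t.verts.image (fun x => 2 * x) ∪ s.verts.image (fun x => 2 * x + 1)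
  parent := fun x =>
    if x % 2 = 0 then (t.parent (x / 2)).map fun w => 2 * w
    else
      match s.parent (x / 2) with
      | some w => some (2 * w + 1)
      | none => if x / 2 ∈ s.verts then some (2 * v) else none
  color := fun x =>
    if x % 2 = 0 then t.color (x / 2)
    else
      match s.parent (x / 2) with
      | some _ => s.color (x / 2)
      | none => p

/-- the vertices lying (weakly) above x: the component not containing the
root after deleting the edge below x. -/
def aboveSet (u : PForest n) (x : ℕ) : Finset ℕ :=
  u.verts.filter fun y => u.Anc y x

/-- n(s,t,u): the number of edges of u (indexed by their upper vertex)
whose deletion leaves the component not containing the root isomorphic to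
s and the component containing the root isomorphic to t. -/
def nCount (s t u : PForest n) : ℕ :=
  (u.verts.filter fun x => (u.parent x).isSome ∧
    PIso (u.restrict (u.aboveSet x)) s ∧
    PIso (u.restrict (u.verts \ u.aboveSet x)) t).card

/-- the order of the automorphism group of the n-colored forest t. -/
def autCount (t : PForest n) : ℕ :=
  Nat.card {e : {x // x ∈ t.verts} ≃ {x // x ∈ t.verts} // IsIsoFn t t e}

/-- the size of the orbit of the vertex v under the automorphism group. -/
def orbitCount (t : PForest n) (v : ℕ) (hv : v ∈ t.verts) : ℕ :=
  Nat.card {w : {x // x ∈ t.verts} //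
    ∃ e : {x // x ∈ t.verts} ≃ {x // x ∈ t.verts}, IsIsoFn t t e ∧ e ⟨v, hv⟩ = w}

end PForest

end

/- STATEMENT 8: the map ψ sending an edge-colored tree to the sum over
root labels of the corresponding vertex-labeled trees is an injective
morphism from the grafting product on edge-colored trees to the grafting
product on vertex-labeled trees (the free pre-Lie algebra of
Chapoton-Livernet), with image the span of the sums of labeled trees
differing only in the label of the root.

Vertex-labeled trees are encoded by the same structure `PForest`, the
function `color` being read as the labelling of the vertices; their
isomorphisms must preserve all labels. -/

noncomputable section
open PForest

variable (K : Type*) [Field K] {n : ℕ} [NeZero n]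

/-- label-preserving isomorphisms of vertex-labeled forests. -/
def LIsoFn {n : ℕ} (s t : PForest n)
    (e : {x // x ∈ s.verts} ≃ {x // x ∈ t.verts}) : Prop :=
  (∀ v w : {x // x ∈ s.verts},
      s.parent (v : ℕ) = some (w : ℕ) ↔ t.parent ((e v : ℕ)) = some ((e w : ℕ))) ∧
    ∀ v : {x // x ∈ s.verts}, t.color ((e v : ℕ)) = s.color (v : ℕ)

def LIso {n : ℕ} (s t : PForest n) : Prop := ∃ e, LIsoFn s t e

/-- isomorphism classes of vertex-labeled rooted trees. -/
def LTreeClass (n : ℕ) : Type := Quot fun a b : TreeObj n => LIso a.1 b.1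

def mkClassL {n : ℕ} [NeZero n] (t : PForest n) : LTreeClass n :=
  if h : t.WF ∧ t.IsTree then Quot.mk _ (⟨t, h⟩ : TreeObj n)
  else Quot.mk _ (defaultTreeObj n)

/-- grafting of vertex-labeled trees (labels preserved). -/
def graftL {n : ℕ} (s t : PForest n) (v : ℕ) : PForest n where
  verts := t.verts.image (fun x => 2 * x) ∪ s.verts.image (fun x => 2 * x + 1)
  parent := fun x =>
    if x % 2 = 0 then (t.parent (x / 2)).map fun w => 2 * w
    else
      match s.parent (x / 2) with
      | some w => some (2 * w + 1)
      | none => if x / 2 ∈ s.verts then some (2 * v) else none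
  color := fun x => if x % 2 = 0 then t.color (x / 2) else s.color (x / 2)

/-- the grafting product on basis classes of labeled trees:
`D_s ⋆ D_t = Σ_{v ∈ t} D_{s ∘_v t}`. -/
def graftSumL (S T : LTreeClass n) : LTreeClass n →₀ K :=
  ∑ v ∈ (Quot.out T).1.verts,
    Finsupp.single (mkClassL (graftL (Quot.out S).1 (Quot.out T).1 v)) (1 : K)

/-- the bilinear grafting product on the span of labeled trees. -/
def starM : (LTreeClass n →₀ K) →ₗ[K] (LTreeClass n →₀ K) →ₗ[K] (LTreeClass n →₀ K) :=
  Finsupp.lsum K fun S => LinearMap.toSpanSingleton K _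
    (Finsupp.lsum K fun T => LinearMap.toSpanSingleton K _ (graftSumL K S T))

/-- the grafting product on basis classes of edge-colored trees:
`D_s *' D_t = Σ_{v ∈ t} Σ_p D_{s ∘_v^p t}`. -/
def graftSum (S T : TreeClass n) : TreeClass n →₀ K :=
  ∑ v ∈ (Quot.out T).1.verts, ∑ p : Fin n,
    Finsupp.single (mkClass (graft (Quot.out S).1 (Quot.out T).1 v p)) (1 : K)

/-- the bilinear grafting product on the span of edge-colored trees. -/
def grmul : (TreeClass n →₀ K) →ₗ[K] (TreeClass n →₀ K) →ₗ[K] (TreeClass n →₀ K) :=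
  Finsupp.lsum K fun S => LinearMap.toSpanSingleton K _
    (Finsupp.lsum K fun T => LinearMap.toSpanSingleton K _ (graftSum K S T))

/-- the vertex-labeled tree obtained from an edge-colored tree by
labeling each non-root vertex with the color of the edge joining it to
the vertex below it, and the root with i.  (Applied to a vertex-labeled
tree, it relabels the root with i and keeps the other labels.) -/
def toLabeled {n : ℕ} (t : PForest n) (i : Fin n) : PForest n :=
  ⟨t.verts, t.parent, fun v => if t.parent v = none then i else t.color v⟩

/-- the map ψ : `ψ(D_t) = Σ_{i=1}^n t_i`. -/
def psi : (TreeClass n →₀ K) →ₗ[K] (LTreeClass n →₀ K) :=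
  Finsupp.lsum K fun T => LinearMap.toSpanSingleton K _
    (∑ i : Fin n, Finsupp.single (mkClassL (toLabeled (Quot.out T).1 i)) (1 : K))

end

/-!
Among the labeled trees `t_i` making up `ψ(D_t)`, only `t_0` has root label `0`, and forgetting
its labels gives back `t`; this yields a left inverse of `ψ`.

For multiplicativity it suffices to compare basis trees. Relabeling turns the colored graft
`s ∘_v^p t` into the labeled graft `s_p ∘_v t_i`: the new edge of color `p` becomes the root label
of the grafted copy of `s`. Hence `ψ(D_s *' D_t)` and `ψ(D_s) ⋆ ψ(D_t)` are both
`Σ_{v,p,i} s_p ∘_v t_i`. The real work is that grafting respects isomorphism, so that the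
grafting products, which are defined on chosen representatives, can be computed on any
representatives.
-/

noncomputable section

open PForest

variable {n : ℕ}

section Isomorphisms

theorem LIso.refl (t : PForest n) : LIso t t :=
  ⟨Equiv.refl _, fun _ _ => Iff.rfl, fun _ => rfl⟩

theorem LIso.symm {s t : PForest n} (h : LIso s t) : LIso t s := by
  obtain ⟨e, hpar, hcol⟩ := h
  refine ⟨e.symm, fun v w => ?_, fun v => ?_⟩
  · rw [hpar, e.apply_symm_apply, e.apply_symm_apply]
  · rw [← hcol, e.apply_symm_apply]

theorem LIso.trans {s t u : PForest n} (h : LIso s t) (h' : LIso t u) : LIso s u := by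
  obtain ⟨e, hpar, hcol⟩ := h
  obtain ⟨f, hpar', hcol'⟩ := h'
  exact ⟨e.trans f, fun v w => (hpar v w).trans (hpar' _ _),
    fun v => (hcol' _).trans (hcol v)⟩

theorem LIso.pIso {s t : PForest n} (h : LIso s t) : PIso s t := by
  obtain ⟨e, hpar, hcol⟩ := h
  exact ⟨e, hpar, fun v _ => hcol v⟩

theorem PForest.parent_eq_none_iff_of_parent_iff {s t : PForest n} (hs : s.WF) (ht : t.WF)
    {e : {x // x ∈ s.verts} ≃ {x // x ∈ t.verts}}
    (hpar : ∀ v w : {x // x ∈ s.verts},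
      s.parent v = some (w : ℕ) ↔ t.parent (e v) = some (e w : ℕ))
    (v : {x // x ∈ s.verts}) :
    s.parent v = none ↔ t.parent (e v) = none := by
  refine not_iff_not.mp ⟨fun h => ?_, fun h => ?_⟩
  · obtain ⟨w, hw⟩ := Option.ne_none_iff_exists'.mp h
    simp [(hpar v ⟨w, (hs.1 _ _ hw).2⟩).mp hw]
  · obtain ⟨w, hw⟩ := Option.ne_none_iff_exists'.mp h
    simp [(hpar v (e.symm ⟨w, (ht.1 _ _ hw).2⟩)).mpr (by simpa using hw)]

theorem PForest.PIso.refl (t : PForest n) : PIso t t :=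
  ⟨Equiv.refl _, fun _ _ => Iff.rfl, fun _ _ => rfl⟩

theorem PForest.PIso.symm {s t : PForest n} (hs : s.WF) (ht : t.WF) (h : PIso s t) :
    PIso t s := by
  obtain ⟨e, hpar, hcol⟩ := h
  have hpar' : ∀ v w : {x // x ∈ t.verts},
      t.parent v = some (w : ℕ) ↔ s.parent (e.symm v) = some (e.symm w : ℕ) := by
    intro v w
    rw [hpar, e.apply_symm_apply, e.apply_symm_apply]
  refine ⟨e.symm, hpar', fun v hv => ?_⟩
  have hroot := parent_eq_none_iff_of_parent_iff ht hs hpar' v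
  have hv' : (s.parent (e.symm v)).isSome := by
    simpa [← Option.ne_none_iff_isSome, ← hroot] using hv
  simpa using (hcol (e.symm v) hv').symm

theorem PForest.PIso.trans {s t u : PForest n} (hs : s.WF) (ht : t.WF) (h : PIso s t)
    (h' : PIso t u) : PIso s u := by
  obtain ⟨e, hpar, hcol⟩ := h
  obtain ⟨f, hpar', hcol'⟩ := h'
  refine ⟨e.trans f, fun v w => (hpar v w).trans (hpar' _ _), fun v hv => ?_⟩
  have hroot := parent_eq_none_iff_of_parent_iff hs ht hpar v
  have hv' : (t.parent (e v)).isSome := by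
    simpa [← Option.ne_none_iff_isSome, ← hroot] using hv
  exact (hcol' _ hv').trans (hcol v hv)

end Isomorphisms

section Classes

theorem PForest.PIso.of_out_mk (a : TreeObj n) :
    PIso (Quot.out (Quot.mk _ a : TreeClass n)).1 a.1 :=
  have hequiv : Equivalence fun a b : TreeObj n => PIso a.1 b.1 :=
    ⟨fun a => .refl a.1, fun {a b} => .symm a.2.1 b.2.1, fun {a b _} => .trans a.2.1 b.2.1⟩
  hequiv.eqvGen_iff.mp (Quot.eqvGen_exact (Quot.out_eq _))

theorem LIso.of_out_mk (a : TreeObj n) : LIso (Quot.out (Quot.mk _ a : LTreeClass n)).1 a.1 :=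
  have hequiv : Equivalence fun a b : TreeObj n => LIso a.1 b.1 :=
    ⟨fun a => .refl a.1, .symm, .trans⟩
  hequiv.eqvGen_iff.mp (Quot.eqvGen_exact (Quot.out_eq _))

variable [NeZero n] {t : PForest n}

theorem mkClass_of_isTree (h : t.WF ∧ t.IsTree) : mkClass t = Quot.mk _ ⟨t, h⟩ := dif_pos h

theorem mkClassL_of_isTree (h : t.WF ∧ t.IsTree) : mkClassL t = Quot.mk _ ⟨t, h⟩ := dif_pos h

theorem mkClass_out (T : TreeClass n) : mkClass (Quot.out T).1 = T := by
  rw [mkClass_of_isTree (Quot.out T).2]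
  exact Quot.out_eq T

theorem PForest.PIso.of_out_mkClass (h : t.WF ∧ t.IsTree) :
    PIso (Quot.out (mkClass t)).1 t := by
  rw [mkClass_of_isTree h]
  exact .of_out_mk _

theorem LIso.of_out_mkClassL (h : t.WF ∧ t.IsTree) : LIso (Quot.out (mkClassL t)).1 t := by
  rw [mkClassL_of_isTree h]
  exact .of_out_mk _

theorem mkClassL_eq_of_lIso {s : PForest n} (hs : s.WF ∧ s.IsTree) (ht : t.WF ∧ t.IsTree)
    (h : LIso s t) : mkClassL s = mkClassL t := by
  rw [mkClassL_of_isTree hs, mkClassL_of_isTree ht]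
  exact Quot.sound h

end Classes

section Relabeling

theorem toLabeled_isTree {t : PForest n} (h : t.WF ∧ t.IsTree) (i : Fin n) :
    (toLabeled t i).WF ∧ (toLabeled t i).IsTree := h

theorem toLabeled_pIso (t : PForest n) (i : Fin n) : PIso (toLabeled t i) t :=
  ⟨Equiv.refl _, fun _ _ => Iff.rfl,
    fun _ hv => (if_neg (Option.ne_none_iff_isSome.mpr hv)).symm⟩

theorem LIso.toLabeled_of_pIso {s t : PForest n} (hs : s.WF) (ht : t.WF) (h : PIso s t)
    (i : Fin n) : LIso (toLabeled s i) (toLabeled t i) := by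
  obtain ⟨e, hpar, hcol⟩ := h
  refine ⟨e, hpar, fun v => ?_⟩
  change (if t.parent (e v) = none then i else t.color (e v)) =
    if s.parent v = none then i else s.color v
  have hroot := parent_eq_none_iff_of_parent_iff hs ht hpar v
  by_cases hv : s.parent v = none
  · rw [if_pos hv, if_pos (hroot.mp hv)]
  · rw [if_neg hv, if_neg (mt hroot.mpr hv), hcol v (Option.ne_none_iff_isSome.mp hv)]

variable [NeZero n]

theorem mkClassL_toLabeled_out_mkClass {t : PForest n} (h : t.WF ∧ t.IsTree) (i : Fin n) :
    mkClassL (toLabeled (Quot.out (mkClass t)).1 i) = mkClassL (toLabeled t i) :=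
  have hout := (Quot.out (mkClass t)).2
  mkClassL_eq_of_lIso (toLabeled_isTree hout i) (toLabeled_isTree h i)
    (.toLabeled_of_pIso hout.1 h.1 (.of_out_mkClass h) i)

end Relabeling

section Injectivity

namespace TreeObj

def root (a : TreeObj n) : ℕ := (Finset.card_eq_one.mp a.2.2).choose

theorem eq_root_iff (a : TreeObj n) {x : ℕ} :
    x = a.root ↔ x ∈ a.1.verts ∧ a.1.parent x = none := by
  have hx := Finset.ext_iff.mp (Finset.card_eq_one.mp a.2.2).choose_spec x
  rw [Finset.mem_filter, Finset.mem_singleton] at hx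
  exact hx.symm

def rootLabel (a : TreeObj n) : Fin n := a.1.color a.root

theorem rootLabel_eq_of_lIso {a b : TreeObj n} (h : LIso a.1 b.1) :
    a.rootLabel = b.rootLabel := by
  obtain ⟨e, hpar, hcol⟩ := h
  have ha := a.eq_root_iff.mp rfl
  have he : (e ⟨a.root, ha.1⟩ : ℕ) = b.root :=
    b.eq_root_iff.mpr ⟨(e _).2, (parent_eq_none_iff_of_parent_iff a.2.1 b.2.1 hpar _).mp ha.2⟩
  rw [rootLabel, rootLabel, ← he]
  exact (hcol ⟨a.root, ha.1⟩).symm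

end TreeObj

namespace LTreeClass

def rootLabel : LTreeClass n → Fin n :=
  Quot.lift TreeObj.rootLabel fun _ _ => TreeObj.rootLabel_eq_of_lIso

def forget : LTreeClass n → TreeClass n :=
  Quot.lift (Quot.mk _) fun _ _ h => Quot.sound h.pIso

variable [NeZero n] {t : PForest n}

theorem rootLabel_mkClassL_toLabeled (h : t.WF ∧ t.IsTree) (i : Fin n) :
    (mkClassL (toLabeled t i)).rootLabel = i := by
  rw [mkClassL_of_isTree (toLabeled_isTree h i)]
  have hroot := (TreeObj.eq_root_iff ⟨toLabeled t i, toLabeled_isTree h i⟩).mp rfl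
  exact if_pos hroot.2

theorem forget_mkClassL_toLabeled (h : t.WF ∧ t.IsTree) (i : Fin n) :
    (mkClassL (toLabeled t i)).forget = mkClass t := by
  rw [mkClassL_of_isTree (toLabeled_isTree h i), mkClass_of_isTree h]
  exact Quot.sound (toLabeled_pIso t i)

end LTreeClass

variable (K : Type*) [Field K] [NeZero n]

theorem psi_single (T : TreeClass n) (c : K) :
    psi K (Finsupp.single T c) =
      c • ∑ i : Fin n, Finsupp.single (mkClassL (toLabeled (Quot.out T).1 i)) (1 : K) := by
  rw [psi, Finsupp.lsum_single, LinearMap.toSpanSingleton_apply]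

def psiLeftInv : (LTreeClass n →₀ K) →ₗ[K] (TreeClass n →₀ K) :=
  Finsupp.lsum K fun c => LinearMap.toSpanSingleton K _
    (if c.rootLabel = 0 then Finsupp.single c.forget (1 : K) else 0)

theorem psiLeftInv_comp_psi : psiLeftInv K ∘ₗ psi K (n := n) = LinearMap.id := by
  refine Finsupp.lhom_ext fun T c => ?_
  have ht := (Quot.out T).2
  have hsummand : ∀ i : Fin n,
      psiLeftInv K (Finsupp.single (mkClassL (toLabeled (Quot.out T).1 i)) 1) =
        if i = 0 then Finsupp.single T 1 else 0 := by
    intro i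
    rw [psiLeftInv, Finsupp.lsum_single, LinearMap.toSpanSingleton_apply, one_smul,
      LTreeClass.rootLabel_mkClassL_toLabeled ht, LTreeClass.forget_mkClassL_toLabeled ht,
      mkClass_out]
  simp [psi_single, hsummand]

theorem psi_injective : Function.Injective (psi K (n := n)) :=
  Function.LeftInverse.injective (g := psiLeftInv K)
    (LinearMap.congr_fun (psiLeftInv_comp_psi K))

end Injectivity

section Grafting

variable {s t : PForest n} {v a b : ℕ}

theorem two_mul_mem_graftL_verts : 2 * a ∈ (graftL s t v).verts ↔ a ∈ t.verts := by
  simp only [graftL, Finset.mem_union, Finset.mem_image]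
  constructor
  · rintro (⟨x, hx, hxa⟩ | ⟨x, _, hxa⟩)
    · rwa [show a = x by omega]
    · omega
  · exact fun h => .inl ⟨a, h, rfl⟩

theorem two_mul_add_one_mem_graftL_verts :
    2 * a + 1 ∈ (graftL s t v).verts ↔ a ∈ s.verts := by
  simp only [graftL, Finset.mem_union, Finset.mem_image]
  constructor
  · rintro (⟨x, _, hxa⟩ | ⟨x, hx, hxa⟩)
    · omega
    · rwa [show a = x by omega]
  · exact fun h => .inr ⟨a, h, rfl⟩

theorem graftL_parent_two_mul :
    (graftL s t v).parent (2 * a) = (t.parent a).map (2 * ·) := by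
  simp [graftL]

theorem graftL_parent_two_mul_add_one :
    (graftL s t v).parent (2 * a + 1) =
      (s.parent a).elim (if a ∈ s.verts then some (2 * v) else none) (some <| 2 * · + 1) := by
  dsimp only [graftL]
  rw [if_neg (by omega), show (2 * a + 1) / 2 = a by omega]
  cases s.parent a <;> rfl

theorem graftL_color_two_mul : (graftL s t v).color (2 * a) = t.color a := by
  simp [graftL]

theorem graftL_color_two_mul_add_one : (graftL s t v).color (2 * a + 1) = s.color a := by
  simp [graftL, Nat.mul_add_div]

theorem graftL_parent_two_mul_eq_two_mul :
    (graftL s t v).parent (2 * a) = some (2 * b) ↔ t.parent a = some b := by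
  simp [graftL_parent_two_mul]

theorem graftL_parent_two_mul_ne_two_mul_add_one :
    (graftL s t v).parent (2 * a) ≠ some (2 * b + 1) := by
  intro h
  obtain ⟨c, -, hc⟩ := Option.map_eq_some_iff.mp (graftL_parent_two_mul ▸ h)
  omega

theorem graftL_parent_two_mul_add_one_eq_two_mul_add_one (ha : a ∈ s.verts) :
    (graftL s t v).parent (2 * a + 1) = some (2 * b + 1) ↔ s.parent a = some b := by
  rw [graftL_parent_two_mul_add_one]
  cases s.parent a with
  | none =>
    simp only [Option.elim_none, if_pos ha, Option.some.injEq, reduceCtorEq, iff_false]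
    omega
  | some c =>
    simp only [Option.elim_some, Option.some.injEq]
    omega

theorem graftL_parent_two_mul_add_one_eq_two_mul (ha : a ∈ s.verts) :
    (graftL s t v).parent (2 * a + 1) = some (2 * b) ↔ s.parent a = none ∧ b = v := by
  rw [graftL_parent_two_mul_add_one]
  cases s.parent a with
  | none =>
    simp only [Option.elim_none, if_pos ha, Option.some.injEq, true_and]
    omega
  | some c =>
    simp only [Option.elim_some, Option.some.injEq, reduceCtorEq, false_and, iff_false]
    omega

theorem graftL_parent_eq_some {x u : ℕ} (h : (graftL s t v).parent x = some u) :
    (∃ a b, x = 2 * a ∧ u = 2 * b ∧ t.parent a = some b) ∨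
      (∃ a b, x = 2 * a + 1 ∧ u = 2 * b + 1 ∧ s.parent a = some b) ∨
      (∃ a, x = 2 * a + 1 ∧ u = 2 * v ∧ a ∈ s.verts ∧ s.parent a = none) := by
  obtain ⟨a, rfl | rfl⟩ := Nat.even_or_odd' x
  · rw [graftL_parent_two_mul, Option.map_eq_some_iff] at h
    obtain ⟨b, hb, rfl⟩ := h
    exact .inl ⟨a, b, rfl, rfl, hb⟩
  · rw [graftL_parent_two_mul_add_one] at h
    cases hsa : s.parent a with
    | some b =>
      obtain rfl : 2 * b + 1 = u := by simpa [hsa] using h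
      exact .inr <| .inl ⟨a, b, rfl, rfl, hsa⟩
    | none =>
      by_cases ha : a ∈ s.verts
      · obtain rfl : 2 * v = u := by simpa [hsa, ha] using h
        exact .inr <| .inr ⟨a, rfl, rfl, ha, hsa⟩
      · simp [hsa, ha] at h

theorem graftL_wf (hs : s.WF) (ht : t.WF) (hv : v ∈ t.verts) : (graftL s t v).WF := by
  obtain ⟨rks, hrks⟩ := hs.2
  obtain ⟨rkt, hrkt⟩ := ht.2
  refine ⟨fun x u h => ?_,
    fun x => if x % 2 = 0 then rkt (x / 2) else rks (x / 2) + rkt v + 1, fun x u h => ?_⟩ <;>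
  rcases graftL_parent_eq_some h with ⟨a, b, rfl, rfl, hab⟩ | ⟨a, b, rfl, rfl, hab⟩ |
    ⟨a, rfl, rfl, ha, -⟩
  · simpa [two_mul_mem_graftL_verts] using ht.1 a b hab
  · simpa [two_mul_add_one_mem_graftL_verts] using hs.1 a b hab
  · simpa [two_mul_mem_graftL_verts, two_mul_add_one_mem_graftL_verts] using ⟨ha, hv⟩
  · simpa using hrkt a b hab
  · simpa [Nat.mul_add_mod, Nat.mul_add_div] using hrks a b hab
  · simp [Nat.mul_add_div]

theorem graftL_roots :
    (graftL s t v).verts.filter (fun x => (graftL s t v).parent x = none) =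
      (t.verts.filter fun a => t.parent a = none).image (2 * ·) := by
  ext x
  obtain ⟨a, rfl | rfl⟩ := Nat.even_or_odd' x
  · simp [two_mul_mem_graftL_verts, graftL_parent_two_mul]
  · simp only [Finset.mem_filter, Finset.mem_image, two_mul_add_one_mem_graftL_verts,
      graftL_parent_two_mul_add_one]
    refine iff_of_false ?_ (by omega)
    cases s.parent a <;> simp_all

theorem graftL_isTree (ht : t.IsTree) : (graftL s t v).IsTree := by
  rw [IsTree, graftL_roots, Finset.card_image_of_injective _ (mul_right_injective₀ two_ne_zero)]
  exact ht

theorem graft_wf (hs : s.WF) (ht : t.WF) (hv : v ∈ t.verts) (p : Fin n) : (graft s t v p).WF :=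
  graftL_wf hs ht hv

theorem graft_isTree (ht : t.IsTree) (p : Fin n) : (graft s t v p).IsTree :=
  graftL_isTree ht

variable (s t v) in
def graftLVertEquiv :
    {a // a ∈ t.verts} ⊕ {b // b ∈ s.verts} ≃ {x // x ∈ (graftL s t v).verts} :=
  Equiv.ofBijective
    (Sum.elim (fun a => ⟨2 * a, two_mul_mem_graftL_verts.mpr a.2⟩)
      (fun b => ⟨2 * b + 1, two_mul_add_one_mem_graftL_verts.mpr b.2⟩))
    ⟨by
      rintro (a | b) (a' | b') h <;>
        simp only [Sum.elim_inl, Sum.elim_inr, Sum.inl.injEq, Sum.inr.injEq,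
          Subtype.ext_iff, reduceCtorEq] at h ⊢ <;>
        omega, fun ⟨x, hx⟩ => by
      obtain ⟨a, rfl | rfl⟩ := Nat.even_or_odd' x
      · exact ⟨.inl ⟨a, two_mul_mem_graftL_verts.mp hx⟩, rfl⟩
      · exact ⟨.inr ⟨a, two_mul_add_one_mem_graftL_verts.mp hx⟩, rfl⟩⟩

theorem LIso.graftL_congr {s s' t t' : PForest n} (hs : s.WF) (hs' : s'.WF)
    {es : {x // x ∈ s.verts} ≃ {x // x ∈ s'.verts}} (hes : LIsoFn s s' es)
    {et : {x // x ∈ t.verts} ≃ {x // x ∈ t'.verts}} (het : LIsoFn t t' et)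
    (v : {x // x ∈ t.verts}) : LIso (graftL s t v) (graftL s' t' (et v)) := by
  let E := (graftLVertEquiv s t v).symm.trans
    ((et.sumCongr es).trans (graftLVertEquiv s' t' (et v)))
  have hE : ∀ z, E (graftLVertEquiv s t v z) = graftLVertEquiv s' t' (et v) (Sum.map et es z) :=
    fun z => by simp [E]
  refine ⟨E, fun x y => ?_, fun x => ?_⟩
  · obtain ⟨z, rfl⟩ := (graftLVertEquiv s t v).surjective x
    obtain ⟨w, rfl⟩ := (graftLVertEquiv s t v).surjective y
    rw [hE, hE]
    rcases z with a | a <;> rcases w with b | b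
    · exact graftL_parent_two_mul_eq_two_mul.trans
        ((het.1 a b).trans graftL_parent_two_mul_eq_two_mul.symm)
    · exact iff_of_false graftL_parent_two_mul_ne_two_mul_add_one
        graftL_parent_two_mul_ne_two_mul_add_one
    · refine (graftL_parent_two_mul_add_one_eq_two_mul a.2).trans
        (Iff.trans ?_ (graftL_parent_two_mul_add_one_eq_two_mul (es a).2).symm)
      rw [parent_eq_none_iff_of_parent_iff hs hs' hes.1 a, Subtype.coe_inj, Subtype.coe_inj,
        et.apply_eq_iff_eq]
    · exact (graftL_parent_two_mul_add_one_eq_two_mul_add_one a.2).trans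
        ((hes.1 a b).trans (graftL_parent_two_mul_add_one_eq_two_mul_add_one (es a).2).symm)
  · obtain ⟨z, rfl⟩ := (graftLVertEquiv s t v).surjective x
    rw [hE]
    rcases z with a | b
    · exact graftL_color_two_mul.trans ((het.2 a).trans graftL_color_two_mul.symm)
    · exact graftL_color_two_mul_add_one.trans
        ((hes.2 b).trans graftL_color_two_mul_add_one.symm)

theorem LIso.of_eqOn_color {s t : PForest n} (hv : s.verts = t.verts) (hp : s.parent = t.parent)
    (hc : Set.EqOn s.color t.color s.verts) : LIso s t :=
  ⟨Equiv.subtypeEquivRight fun x => by rw [hv], fun v w => by simp [hp], fun v => (hc v.2).symm⟩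

theorem lIso_toLabeled_graft (v : ℕ) (p i : Fin n) :
    LIso (toLabeled (graft s t v p) i) (graftL (toLabeled s p) (toLabeled t i) v) := by
  refine .of_eqOn_color rfl rfl fun x hx => ?_
  obtain ⟨a, rfl | rfl⟩ := Nat.even_or_odd' x
  · simp [toLabeled, graft, graftL]
  · have ha : a ∈ s.verts := two_mul_add_one_mem_graftL_verts (v := v) |>.mp hx
    cases hsa : s.parent a <;> simp [toLabeled, graft, graftL, Nat.mul_add_div, hsa, ha]

variable [NeZero n]

theorem mkClassL_toLabeled_graft (hs : s.WF) (ht : t.WF ∧ t.IsTree) (hv : v ∈ t.verts)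
    (p i : Fin n) :
    mkClassL (toLabeled (graft s t v p) i) =
      mkClassL (graftL (toLabeled s p) (toLabeled t i) v) :=
  mkClassL_eq_of_lIso ⟨graft_wf hs ht.1 hv p, graft_isTree ht.2 p⟩
    ⟨graftL_wf hs ht.1 hv, graftL_isTree ht.2⟩ (lIso_toLabeled_graft v p i)

end Grafting

section Multiplicativity

variable (K : Type*) [Field K] [NeZero n]

theorem starM_single_single (S T : LTreeClass n) :
    starM K (Finsupp.single S 1) (Finsupp.single T 1) = graftSumL K S T := by
  simp [starM]

theorem grmul_single_single (S T : TreeClass n) :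
    grmul K (Finsupp.single S 1) (Finsupp.single T 1) = graftSum K S T := by
  simp [grmul]

theorem graftSumL_mkClassL {s t : PForest n} (hs : s.WF ∧ s.IsTree) (ht : t.WF ∧ t.IsTree) :
    graftSumL K (mkClassL s) (mkClassL t) =
      ∑ v ∈ t.verts, Finsupp.single (mkClassL (graftL s t v)) 1 := by
  obtain ⟨es, hes⟩ := (LIso.of_out_mkClassL hs).symm
  obtain ⟨et, het⟩ := (LIso.of_out_mkClassL ht).symm
  have hs' := (Quot.out (mkClassL s)).2
  have ht' := (Quot.out (mkClassL t)).2
  rw [graftSumL, ← Finset.sum_coe_sort (Quot.out (mkClassL t)).1.verts, ← et.sum_comp,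
    ← Finset.sum_coe_sort t.verts]
  refine Finset.sum_congr rfl fun v _ => congrArg (Finsupp.single · 1) ?_
  exact (mkClassL_eq_of_lIso ⟨graftL_wf hs.1 ht.1 v.2, graftL_isTree ht.2⟩
    ⟨graftL_wf hs'.1 ht'.1 (et v).2, graftL_isTree ht'.2⟩
    (.graftL_congr hs.1 hs'.1 hes het v)).symm

theorem psi_single_mkClass {t : PForest n} (ht : t.WF ∧ t.IsTree) :
    psi K (Finsupp.single (mkClass t) 1) = ∑ i, Finsupp.single (mkClassL (toLabeled t i)) 1 := by
  simp [psi_single, mkClassL_toLabeled_out_mkClass ht]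

theorem psi_graftSum (S T : TreeClass n) :
    psi K (graftSum K S T) =
      starM K (psi K (Finsupp.single S 1)) (psi K (Finsupp.single T 1)) := by
  have hs := (Quot.out S).2
  have ht := (Quot.out T).2
  calc psi K (graftSum K S T)
      = ∑ v ∈ (Quot.out T).1.verts, ∑ p, ∑ i, Finsupp.single
          (mkClassL (graftL (toLabeled (Quot.out S).1 p) (toLabeled (Quot.out T).1 i) v)) 1 := by
        rw [graftSum, map_sum]
        refine Finset.sum_congr rfl fun v hv => ?_
        simp only [map_sum, psi_single_mkClass K ⟨graft_wf hs.1 ht.1 hv _, graft_isTree ht.2 _⟩,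
          mkClassL_toLabeled_graft hs.1 ht hv]
    _ = ∑ p, ∑ i, graftSumL K (mkClassL (toLabeled (Quot.out S).1 p))
          (mkClassL (toLabeled (Quot.out T).1 i)) := by
        simp only [graftSumL_mkClassL K (toLabeled_isTree hs _) (toLabeled_isTree ht _)]
        rw [Finset.sum_comm]
        exact Finset.sum_congr rfl fun _ _ => Finset.sum_comm
    _ = _ := by
        simp only [psi_single, one_smul, map_sum, LinearMap.sum_apply, starM_single_single]
        exact Finset.sum_comm

theorem psi_grmul (x y : TreeClass n →₀ K) :
    psi K (grmul K x y) = starM K (psi K x) (psi K y) := by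
  induction x using Finsupp.induction_linear with
  | zero => simp
  | add x x' hx hx' => simp [hx, hx']
  | single S a =>
    induction y using Finsupp.induction_linear with
    | zero => simp
    | add y y' hy hy' => simp [hy, hy']
    | single T b =>
      rw [← Finsupp.smul_single_one S a, ← Finsupp.smul_single_one T b]
      simp only [map_smul, LinearMap.smul_apply, grmul_single_single, psi_graftSum]

end Multiplicativity

section Range

variable (K : Type*) [Field K] [NeZero n]

theorem psi_eq_linearCombination :
    psi K (n := n) = Finsupp.linearCombination K fun T =>
      ∑ i, Finsupp.single (mkClassL (toLabeled (Quot.out T).1 i)) 1 :=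
  Finsupp.lhom_ext fun T c => by simp [psi_single]

theorem range_psi :
    LinearMap.range (psi K (n := n)) = Submodule.span K
      {m | ∃ a : TreeObj n, m = ∑ i, Finsupp.single (mkClassL (toLabeled a.1 i)) 1} := by
  rw [psi_eq_linearCombination, Finsupp.range_linearCombination]
  congr 1
  ext m
  constructor
  · rintro ⟨T, rfl⟩
    exact ⟨Quot.out T, rfl⟩
  · rintro ⟨a, rfl⟩
    refine ⟨Quot.mk _ a, ?_⟩
    have hpsi := psi_single_mkClass K a.2
    rw [mkClass_of_isTree a.2] at hpsi
    exact (one_smul K _).symm.trans ((psi_single K _ 1).symm.trans hpsi)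

theorem psi_preLie_embedding (K : Type*) [Field K] (n : ℕ) [NeZero n] :
    Function.Injective (psi K (n := n)) ∧
    (∀ x y : TreeClass n →₀ K,
        psi K (grmul K x y) = starM K (psi K x) (psi K y)) ∧
    LinearMap.range (psi K (n := n)) =
      Submodule.span K
        {m : LTreeClass n →₀ K | ∃ a : TreeObj n,
          m = ∑ i : Fin n, Finsupp.single (mkClassL (toLabeled a.1 i)) (1 : K)} :=
  ⟨psi_injective K, psi_grmul K, range_psi K⟩

end Range

end
end

section
/- On k[Y_∞], the k-linear span of planar binary trees, define the pruning operator P : k[Y_∞] → k[Y_∞] ⊗ k[Y_∞] on basis trees by P(λ(T,1)) = 0 and P(λ(T,S)) = Σ_i λ(T, S_i') ⊗ S_i'' + λ(T,1) ⊗ S for S ≠ 1, where P(S) = Σ_i S_i' ⊗ S_i''. Define Δ^P : k[Y_∞] → k[Y_∞] ⊗ k[Y_∞] by Δ^P(1) = 1 ⊗ 1 and Δ^P(T) = 1 ⊗ T + P(T) + T ⊗ 1 for every planar binary tree T ≠ 1, and ε : k[Y_∞] → k by ε(1) = 1 and ε(T) = 0 for T ≠ 1. Then (k[Y_∞], Δ^P,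 ε) is a counital coassociative coalgebra: (Δ^P ⊗ id) ∘ Δ^P = (id ⊗ Δ^P) ∘ Δ^P and (ε ⊗ id) ∘ Δ^P = id = (id ⊗ ε) ∘ Δ^P. Consequently, the free unital associative algebra T(k[Y_∞]) on the pointed vector space k[Y_∞], with Δ^P extended to an algebra homomorphism, is a bialgebra (the Brouder–Frabetti pruning Hopf algebra). -/
/- STATEMENT 11: the Brouder–Frabetti pruning coproduct on planar binary
trees is coassociative and counital, and extends to a bialgebra structure
on the free unital associative algebra on the pointed vector space
`k[Y_∞]` (identifying the basepoint `1` with the algebra unit). -/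

inductive BTree : Type
  | leaf : BTree
  | node : BTree → BTree → BTree
  deriving DecidableEq

noncomputable section

open Finsupp TensorProduct

variable {K : Type*} [Field K]

/-- The pruning operator, on basis trees:
`P(λ(T,1)) = 0`, `P(λ(T,S)) = Σᵢ λ(T,Sᵢ') ⊗ Sᵢ'' + λ(T,1) ⊗ S` for `S ≠ 1`
(values in the free vector space on pairs of trees, representing the
tensor square). -/
def prune : BTree → ((BTree × BTree) →₀ K)
  | .leaf => 0
  | .node _ .leaf => 0
  | .node T (.node S₁ S₂) =>
      ((prune (BTree.node S₁ S₂)).sum fun p c =>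
        Finsupp.single (BTree.node T p.1, p.2) c)
        + Finsupp.single (BTree.node T BTree.leaf, BTree.node S₁ S₂) 1

/-- the pruning coproduct: `Δᴾ(1) = 1 ⊗ 1`,
`Δᴾ(T) = 1 ⊗ T + P(T) + T ⊗ 1` for `T ≠ 1`. -/
def deltaP (t : BTree) : (BTree × BTree) →₀ K :=
  if t = BTree.leaf then Finsupp.single (BTree.leaf, BTree.leaf) 1
  else Finsupp.single (BTree.leaf, t) 1 + prune t + Finsupp.single (t, BTree.leaf) 1

/-- `Δᴾ ⊗ id` on the tensor square (free vector space on triples). -/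
def expandL (x : (BTree × BTree) →₀ K) : (BTree × BTree × BTree) →₀ K :=
  x.sum fun p c => (deltaP p.1).sum fun q d => Finsupp.single (q.1, q.2, p.2) (c * d)

/-- `id ⊗ Δᴾ` on the tensor square. -/
def expandR (x : (BTree × BTree) →₀ K) : (BTree × BTree × BTree) →₀ K :=
  x.sum fun p c => (deltaP p.2).sum fun q d => Finsupp.single (p.1, q.1, q.2) (c * d)

def eps (t : BTree) : K := if t = BTree.leaf then 1 else 0

/-- the free unital associative algebra on the pointed vector space
`k[Y_∞]`: the tensor algebra on the span of non-leaf trees, the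
basepoint (single-leaf tree) being identified with the unit. -/
abbrev TA (K : Type*) [Field K] : Type _ :=
  TensorAlgebra K ({t : BTree // t ≠ BTree.leaf} →₀ K)

/-- a planar binary tree, as an element of `T(k[Y_∞])`. -/
def emb (t : BTree) : TA K :=
  if h : t = BTree.leaf then 1
  else TensorAlgebra.ι K (Finsupp.single (⟨t, h⟩ : {t : BTree // t ≠ BTree.leaf}) (1 : K))

/-- image of a formal sum of pairs of trees in `T(k[Y_∞]) ⊗ T(k[Y_∞])`. -/
def img (x : (BTree × BTree) →₀ K) : TA K ⊗[K] TA K :=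
  x.sum fun p c => c • (emb p.1 ⊗ₜ[K] emb p.2)

/-!
With `λ(T, -) ⊗ id` grafting onto the first tensor factor, `Δᴾ` obeys the single recursion
`Δᴾ(λ(T, S)) = 1 ⊗ λ(T, S) + (λ(T, -) ⊗ id) Δᴾ(S)`, valid also for `S = 1`. Feeding it into both
sides of coassociativity, both contain `1 ⊗ 1 ⊗ λ(T, S) + 1 ⊗ (λ(T, -) ⊗ id) Δᴾ(S)`, and what
remains on each side is the same side for `S`, grafted; so coassociativity, and likewise
counitality, follow by induction on the right subtree.
On `T(k[Y_∞])` the comultiplication and counit are the algebra maps extending `Δᴾ` and `ε` from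
the generators, so the bialgebra identities, being equalities of algebra maps, need only be checked
on trees, where they are the identities above.
-/

def graftFst {α : Type*} (T : BTree) (p : BTree × α) : BTree × α := (.node T p.1, p.2)

lemma prune_node_add_single (T S : BTree) :
    prune (K := K) (.node T S) + single (.node T S, .leaf) 1
      = mapDomain (graftFst T) (deltaP S) := by
  cases S with
  | leaf => simp [prune, deltaP, graftFst]
  | node S₁ S₂ =>
    simp only [prune, deltaP, reduceCtorEq, if_false, mapDomain_add, mapDomain_single]
    rw [show (prune (.node S₁ S₂)).sum (fun p c => single (BTree.node T p.1, p.2) c)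
      = mapDomain (graftFst T) (prune (K := K) (.node S₁ S₂)) from rfl]
    simp only [graftFst]
    abel

lemma deltaP_leaf : deltaP (K := K) .leaf = single (.leaf, .leaf) 1 := if_pos rfl

lemma deltaP_node (T S : BTree) :
    deltaP (K := K) (.node T S)
      = single (.leaf, .node T S) 1 + mapDomain (graftFst T) (deltaP S) := by
  rw [← prune_node_add_single, deltaP, if_neg BTree.noConfusion, add_assoc]

def expandLₗ : ((BTree × BTree) →₀ K) →ₗ[K] ((BTree × BTree × BTree) →₀ K) :=
  linearCombination K fun p => mapDomain (fun q => (q.1, q.2, p.2)) (deltaP p.1)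

def expandRₗ : ((BTree × BTree) →₀ K) →ₗ[K] ((BTree × BTree × BTree) →₀ K) :=
  linearCombination K fun p => mapDomain (fun q => (p.1, q.1, q.2)) (deltaP p.2)

lemma sum_single_mul_eq_smul_mapDomain {R α β : Type*} [Semiring R] (v : α →₀ R) (f : α → β)
    (c : R) :
    (v.sum fun a d => single (f a) (c * d)) = c • mapDomain f v := by
  rw [← mapDomain_smul, mapDomain, sum_smul_index fun _ => single_zero _]

lemma expandL_eq_expandLₗ (x : (BTree × BTree) →₀ K) : expandL x = expandLₗ x := by
  simp only [expandL, expandLₗ, linearCombination_apply, sum_single_mul_eq_smul_mapDomain]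

lemma expandR_eq_expandRₗ (x : (BTree × BTree) →₀ K) : expandR x = expandRₗ x := by
  simp only [expandR, expandRₗ, linearCombination_apply, sum_single_mul_eq_smul_mapDomain]

lemma expandLₗ_single_leaf (S : BTree) :
    expandLₗ (K := K) (single (.leaf, S) 1) = single (.leaf, .leaf, S) 1 := by
  simp [expandLₗ, deltaP_leaf]

lemma expandRₗ_single_leaf (S : BTree) :
    expandRₗ (K := K) (single (.leaf, S) 1) = mapDomain (Prod.mk .leaf) (deltaP S) := by
  simp [expandRₗ]

lemma expandLₗ_mapDomain_graftFst (T : BTree) (y : (BTree × BTree) →₀ K) :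
    expandLₗ (mapDomain (graftFst T) y)
      = mapDomain (fun p => (.leaf, .node T p.1, p.2)) y + mapDomain (graftFst T) (expandLₗ y) := by
  induction y using Finsupp.induction_linear with
  | zero => simp
  | add y z hy hz => simp only [mapDomain_add, map_add, hy, hz]; abel
  | single p c =>
    simp only [expandLₗ, mapDomain_single, linearCombination_single, deltaP_node, graftFst,
      mapDomain_add, mapDomain_smul, smul_add, smul_single_one, ← mapDomain_comp]
    rfl

lemma expandRₗ_mapDomain_graftFst (T : BTree) (y : (BTree × BTree) →₀ K) :
    expandRₗ (mapDomain (graftFst T) y) = mapDomain (graftFst T) (expandRₗ y) := by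
  induction y using Finsupp.induction_linear with
  | zero => simp
  | add y z hy hz => simp only [mapDomain_add, map_add, hy, hz]
  | single p c =>
    simp only [expandRₗ, mapDomain_single, linearCombination_single, graftFst,
      mapDomain_smul, ← mapDomain_comp]
    rfl

lemma expandLₗ_deltaP (t : BTree) : expandLₗ (deltaP (K := K) t) = expandRₗ (deltaP t) := by
  induction t with
  | leaf => simp [deltaP_leaf, expandLₗ, expandRₗ]
  | node T S _ ih =>
    rw [deltaP_node, map_add, map_add, expandLₗ_single_leaf, expandRₗ_single_leaf,
      expandLₗ_mapDomain_graftFst, expandRₗ_mapDomain_graftFst, ih, deltaP_node,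
      mapDomain_add, mapDomain_single, ← mapDomain_comp, add_assoc]
    rfl

lemma deltaP_coassoc (t : BTree) : expandL (K := K) (deltaP t) = expandR (deltaP t) := by
  rw [expandL_eq_expandLₗ, expandR_eq_expandRₗ, expandLₗ_deltaP]

def counitLₗ : ((BTree × BTree) →₀ K) →ₗ[K] (BTree →₀ K) :=
  linearCombination K fun p => eps (K := K) p.1 • single p.2 1

def counitRₗ : ((BTree × BTree) →₀ K) →ₗ[K] (BTree →₀ K) :=
  linearCombination K fun p => eps (K := K) p.2 • single p.1 1

lemma eps_node (T S : BTree) : eps (K := K) (.node T S) = 0 := if_neg BTree.noConfusion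

lemma counitLₗ_apply (x : (BTree × BTree) →₀ K) :
    counitLₗ x = x.sum fun p c => (eps p.1 * c) • single p.2 (1 : K) := by
  simp only [counitLₗ, linearCombination_apply, smul_smul, mul_comm]

lemma counitRₗ_apply (x : (BTree × BTree) →₀ K) :
    counitRₗ x = x.sum fun p c => (eps p.2 * c) • single p.1 (1 : K) := by
  simp only [counitRₗ, linearCombination_apply, smul_smul, mul_comm]

lemma counitLₗ_deltaP (t : BTree) : counitLₗ (deltaP (K := K) t) = single t 1 := by
  cases t with
  | leaf => simp [counitLₗ, deltaP_leaf, eps]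
  | node T S =>
    have hgraft : counitLₗ (mapDomain (graftFst T) (deltaP (K := K) S)) = 0 := by
      have : (fun p : BTree × BTree => eps (K := K) p.1 • single p.2 (1 : K)) ∘ graftFst T = 0 :=
        funext fun p => by simp [graftFst, eps_node]
      rw [counitLₗ, linearCombination_mapDomain, this, linearCombination_zero, LinearMap.zero_apply]
    rw [deltaP_node, map_add, hgraft, add_zero]
    simp [counitLₗ, eps]

lemma counitRₗ_mapDomain_graftFst (T : BTree) (y : (BTree × BTree) →₀ K) :
    counitRₗ (mapDomain (graftFst T) y) = mapDomain (.node T) (counitRₗ y) := by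
  induction y using Finsupp.induction_linear with
  | zero => simp
  | add y z hy hz => simp only [mapDomain_add, map_add, hy, hz]
  | single p c =>
    simp only [counitRₗ, mapDomain_single, linearCombination_single, graftFst, mapDomain_smul]

lemma counitRₗ_deltaP (t : BTree) : counitRₗ (deltaP (K := K) t) = single t 1 := by
  induction t with
  | leaf => simp [counitRₗ, deltaP_leaf, eps]
  | node T S _ ih =>
    rw [deltaP_node, map_add, counitRₗ_mapDomain_graftFst, ih, mapDomain_single]
    simp [counitRₗ, eps_node]

def imgₗ : ((BTree × BTree) →₀ K) →ₗ[K] TA K ⊗[K] TA K :=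
  linearCombination K fun p => emb p.1 ⊗ₜ[K] emb p.2

def img3 : ((BTree × BTree × BTree) →₀ K) →ₗ[K] TA K ⊗[K] (TA K ⊗[K] TA K) :=
  linearCombination K fun q => emb q.1 ⊗ₜ[K] (emb q.2.1 ⊗ₜ[K] emb q.2.2)

lemma img_eq_imgₗ (x : (BTree × BTree) →₀ K) : img x = imgₗ x :=
  (linearCombination_apply K x).symm

lemma emb_leaf : emb (K := K) .leaf = 1 := dif_pos rfl

lemma emb_of_ne_leaf {t : BTree} (ht : t ≠ .leaf) :
    emb (K := K) t = TensorAlgebra.ι K (single ⟨t, ht⟩ 1) := dif_neg ht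

def pruningComul : TA K →ₐ[K] TA K ⊗[K] TA K :=
  TensorAlgebra.lift K (linearCombination K fun s : {t : BTree // t ≠ .leaf} => img (deltaP s.1))

def pruningCounit : TA K →ₐ[K] K := TensorAlgebra.lift K 0

lemma pruningComul_emb (t : BTree) : pruningComul (emb (K := K) t) = img (deltaP t) := by
  by_cases ht : t = .leaf
  · subst ht
    rw [emb_leaf, map_one, deltaP_leaf, img, sum_single_index (by simp), one_smul, emb_leaf,
      Algebra.TensorProduct.one_def]
  · rw [emb_of_ne_leaf ht, pruningComul, TensorAlgebra.lift_ι_apply, linearCombination_single,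
      one_smul]

lemma pruningCounit_emb (t : BTree) : pruningCounit (emb (K := K) t) = eps t := by
  by_cases ht : t = .leaf
  · rw [ht, emb_leaf, map_one, eps, if_pos rfl]
  · rw [emb_of_ne_leaf ht, pruningCounit, TensorAlgebra.lift_ι_apply, eps, if_neg ht,
      LinearMap.zero_apply]

lemma TensorAlgebra.algHom_ext_single {R ι A : Type*} [CommSemiring R] [Semiring A] [Algebra R A]
    {f g : TensorAlgebra R (ι →₀ R) →ₐ[R] A}
    (h : ∀ i, f (TensorAlgebra.ι R (single i 1)) = g (TensorAlgebra.ι R (single i 1))) : f = g :=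
  TensorAlgebra.hom_ext (lhom_ext' fun i => LinearMap.ext_ring (h i))

lemma algHom_ext_emb {B : Type*} [Semiring B] [Algebra K B] {f g : TA K →ₐ[K] B}
    (h : ∀ t, f (emb t) = g (emb t)) : f = g :=
  TensorAlgebra.algHom_ext_single fun s => by rw [← emb_of_ne_leaf s.2, h]

lemma assoc_imgₗ_tmul_emb (y : (BTree × BTree) →₀ K) (s : BTree) :
    TensorProduct.assoc K (TA K) (TA K) (TA K) (imgₗ y ⊗ₜ emb s)
      = img3 (mapDomain (fun q => (q.1, q.2, s)) y) := by
  induction y using Finsupp.induction_linear with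
  | zero => simp
  | add y z hy hz => simp only [map_add, add_tmul, hy, hz, mapDomain_add]
  | single p c => simp [imgₗ, img3, smul_tmul']

lemma emb_tmul_imgₗ (s : BTree) (y : (BTree × BTree) →₀ K) :
    emb s ⊗ₜ imgₗ y = img3 (mapDomain (Prod.mk s) y) := by
  induction y using Finsupp.induction_linear with
  | zero => simp
  | add y z hy hz => simp only [map_add, tmul_add, hy, hz, mapDomain_add]
  | single p c => simp [imgₗ, img3]

lemma assoc_map_pruningComul_img (x : (BTree × BTree) →₀ K) :
    TensorProduct.assoc K (TA K) (TA K) (TA K)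
        (map pruningComul.toLinearMap LinearMap.id (img x)) = img3 (expandL x) := by
  rw [img_eq_imgₗ, expandL_eq_expandLₗ]
  induction x using Finsupp.induction_linear with
  | zero => simp
  | add y z hy hz => simp only [map_add, hy, hz]
  | single p c =>
    rw [imgₗ, expandLₗ, linearCombination_single, linearCombination_single, map_smul, map_smul,
      map_smul, map_tmul, AlgHom.toLinearMap_apply, pruningComul_emb, img_eq_imgₗ,
      LinearMap.id_apply, assoc_imgₗ_tmul_emb]

lemma map_pruningComul_img (x : (BTree × BTree) →₀ K) :
    map LinearMap.id pruningComul.toLinearMap (img x) = img3 (expandR x) := by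
  rw [img_eq_imgₗ, expandR_eq_expandRₗ]
  induction x using Finsupp.induction_linear with
  | zero => simp
  | add y z hy hz => simp only [map_add, hy, hz]
  | single p c =>
    rw [imgₗ, expandRₗ, linearCombination_single, linearCombination_single, map_smul, map_smul,
      map_tmul, AlgHom.toLinearMap_apply, pruningComul_emb, img_eq_imgₗ,
      LinearMap.id_apply, emb_tmul_imgₗ]

lemma lid_map_pruningCounit_img (x : (BTree × BTree) →₀ K) :
    TensorProduct.lid K (TA K) (map pruningCounit.toLinearMap LinearMap.id (img x))
      = linearCombination K emb (counitLₗ x) := by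
  rw [img_eq_imgₗ]
  induction x using Finsupp.induction_linear with
  | zero => simp
  | add y z hy hz => simp only [map_add, hy, hz]
  | single p c =>
    simp only [imgₗ, counitLₗ, linearCombination_single, map_smul, map_tmul,
      AlgHom.toLinearMap_apply, pruningCounit_emb, LinearMap.id_apply, lid_tmul, one_smul]

lemma rid_map_pruningCounit_img (x : (BTree × BTree) →₀ K) :
    TensorProduct.rid K (TA K) (map LinearMap.id pruningCounit.toLinearMap (img x))
      = linearCombination K emb (counitRₗ x) := by
  rw [img_eq_imgₗ]
  induction x using Finsupp.induction_linear with
  | zero => simp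
  | add y z hy hz => simp only [map_add, hy, hz]
  | single p c =>
    simp only [imgₗ, counitRₗ, linearCombination_single, map_smul, map_tmul,
      AlgHom.toLinearMap_apply, pruningCounit_emb, LinearMap.id_apply, rid_tmul, one_smul]

lemma pruningComul_coassoc (x : TA K) :
    TensorProduct.assoc K (TA K) (TA K) (TA K)
        (map pruningComul.toLinearMap LinearMap.id (pruningComul x))
      = map LinearMap.id pruningComul.toLinearMap (pruningComul x) := by
  have h : (Algebra.TensorProduct.assoc K K K (TA K) (TA K) (TA K)).toAlgHom.comp
        ((Algebra.TensorProduct.map pruningComul (.id K (TA K))).comp pruningComul)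
      = (Algebra.TensorProduct.map (.id K (TA K)) pruningComul).comp pruningComul :=
    algHom_ext_emb fun t => by
      change TensorProduct.assoc K (TA K) (TA K) (TA K)
        (map pruningComul.toLinearMap LinearMap.id (pruningComul (emb t)))
          = map LinearMap.id pruningComul.toLinearMap (pruningComul (emb t))
      rw [pruningComul_emb, assoc_map_pruningComul_img, map_pruningComul_img, deltaP_coassoc]
  exact congr($h x)

lemma lid_map_pruningCounit_pruningComul (x : TA K) :
    TensorProduct.lid K (TA K) (map pruningCounit.toLinearMap LinearMap.id (pruningComul x))
      = x := by
  have h : (Algebra.TensorProduct.lid K (TA K)).toAlgHom.comp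
        ((Algebra.TensorProduct.map pruningCounit (.id K (TA K))).comp pruningComul)
      = .id K (TA K) :=
    algHom_ext_emb fun t => by
      change TensorProduct.lid K (TA K)
        (map pruningCounit.toLinearMap LinearMap.id (pruningComul (emb t))) = emb t
      rw [pruningComul_emb, lid_map_pruningCounit_img, counitLₗ_deltaP, linearCombination_single,
        one_smul]
  exact congr($h x)

lemma rid_map_pruningCounit_pruningComul (x : TA K) :
    TensorProduct.rid K (TA K) (map LinearMap.id pruningCounit.toLinearMap (pruningComul x))
      = x := by
  have h : (Algebra.TensorProduct.rid K K (TA K)).toAlgHom.comp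
        ((Algebra.TensorProduct.map (.id K (TA K)) pruningCounit).comp pruningComul)
      = .id K (TA K) :=
    algHom_ext_emb fun t => by
      change TensorProduct.rid K (TA K)
        (map LinearMap.id pruningCounit.toLinearMap (pruningComul (emb t))) = emb t
      rw [pruningComul_emb, rid_map_pruningCounit_img, counitRₗ_deltaP, linearCombination_single,
        one_smul]
  exact congr($h x)

theorem pruning_hopf_algebra :
    -- Δᴾ is coassociative
    (∀ t : BTree, expandL (K := K) (deltaP t) = expandR (deltaP t)) ∧
    -- ε is a counit for Δᴾ
    (∀ t : BTree,
      ((deltaP t).sum fun p c => (eps (K := K) p.1 * c) • Finsupp.single p.2 (1 : K))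
        = Finsupp.single t 1) ∧
    (∀ t : BTree,
      ((deltaP t).sum fun p c => (eps (K := K) p.2 * c) • Finsupp.single p.1 (1 : K))
        = Finsupp.single t 1) ∧
    -- consequently, `T(k[Y_∞])` is a bialgebra with comultiplication the
    -- algebra map extending Δᴾ
    (∃ (comul : TA K →ₐ[K] TA K ⊗[K] TA K) (couni : TA K →ₐ[K] K),
      (∀ t : BTree, comul (emb t) = img (deltaP t)) ∧
      (∀ t : BTree, couni (emb t) = eps (K := K) t) ∧
      (∀ x : TA K,
        (TensorProduct.assoc K (TA K) (TA K) (TA K))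
            ((TensorProduct.map comul.toLinearMap LinearMap.id) (comul x))
          = (TensorProduct.map LinearMap.id comul.toLinearMap) (comul x)) ∧
      (∀ x : TA K,
        (TensorProduct.lid K (TA K))
            ((TensorProduct.map couni.toLinearMap LinearMap.id) (comul x)) = x) ∧
      (∀ x : TA K,
        (TensorProduct.rid K (TA K))
            ((TensorProduct.map LinearMap.id couni.toLinearMap) (comul x)) = x)) :=
  ⟨deltaP_coassoc, fun t => (counitLₗ_apply _).symm.trans (counitLₗ_deltaP t),
    fun t => (counitRₗ_apply _).symm.trans (counitRₗ_deltaP t),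
    pruningComul, pruningCounit, pruningComul_emb, pruningCounit_emb, pruningComul_coassoc,
    lid_map_pruningCounit_pruningComul, rid_map_pruningCounit_pruningComul⟩

end
end

section
/- Fix m, l ∈ {1,…,n}. On k[Y_∞^{(n)}], the free k-vector space on planar n-ary trees, define a bilinear product * by: 1 * x = x = x * 1 for all x, and for trees s = λ(s_1,…,s_n) and t = λ(t_1,…,t_n), s * t = λ(s_1,…,s_{m−1}, s_m * t, s_{m+1},…,s_n) + λ(t_1,…,t_{l−1}, s * t_l, t_{l+1},…,t_n) (by induction on total degree). Then * is associative with two-sided unit the single-leaf tree 1, and * is graded: if s has degree a and t has degree b, then s * t is a linear combination of trees of degree a + b. -/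
inductive NTree (n : ℕ) : Type
  | leaf : NTree n
  | node : (Fin n → NTree n) → NTree n

namespace NTree

/-- the degree: the number of applications of `λ` (internal vertices). -/
noncomputable def deg {n : ℕ} (t : NTree n) : ℕ :=
  NTree.rec (motive := fun _ => ℕ) 0 (fun _ ih => 1 + ∑ i, ih i) t

theorem deg_node {n : ℕ} (f : Fin n → NTree n) : deg (node f) = 1 + ∑ i, deg (f i) := rfl

theorem deg_lt {n : ℕ} (f : Fin n → NTree n) (i : Fin n) : deg (f i) < deg (node f) := by
  have h : deg (f i) ≤ ∑ j, deg (f j) :=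
    Finset.single_le_sum (f := fun j => deg (f j)) (fun j _ => Nat.zero_le _) (Finset.mem_univ i)
  rw [deg_node]; omega

end NTree

noncomputable section
open Finsupp

variable {K : Type*} [Field K] {n : ℕ}

/-- replace the `i`-th subtree of a node by each term of a linear combination. -/
def nodeAt (f : Fin n → NTree n) (i : Fin n) (x : NTree n →₀ K) : NTree n →₀ K :=
  x.sum fun u c => Finsupp.single (NTree.node (Function.update f i u)) c

/-- the product on basis trees:
`1 * x = x = x * 1` and
`s * t = λ(s₁,…,sₘ*t,…,sₙ) + λ(t₁,…,s*t_l,…,tₙ)`. -/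
def mulT (m l : Fin n) : NTree n → NTree n → (NTree n →₀ K)
  | .leaf, t => Finsupp.single t 1
  | .node f, .leaf => Finsupp.single (NTree.node f) 1
  | .node f, .node g =>
      nodeAt f m (mulT m l (f m) (.node g)) + nodeAt g l (mulT m l (.node f) (g l))
  termination_by s t => NTree.deg s + NTree.deg t
  decreasing_by
    · have := NTree.deg_lt f m; omega
    · have := NTree.deg_lt g l; omega

def star (m l : Fin n) (x y : NTree n →₀ K) : NTree n →₀ K :=
  x.sum fun s a => y.sum fun t b => (a * b) • mulT m l s t
end

/-!
For trees `s`, `t` not both the leaf, split `s * t = s ≺ t + s ≻ t`, where `s ≺ t` collects the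
terms grafted into the `m`-th subtree of `s` and `s ≻ t` those grafted into the `l`-th subtree
of `t`. These halves satisfy the dendriform relations
`(x ≺ y) ≺ z = x ≺ (y * z)`, `(x ≻ y) ≺ z = x ≻ (y ≺ z)`, `(x * y) ≻ z = x ≻ (y ≻ z)`,
each of which reduces to associativity on triples of smaller total degree (for `m ≠ l` the middle
one holds outright, since its two graftings go into different subtrees of `y`). Summing them gives
associativity on basis trees by induction on the total degree, and bilinearity does the rest.
Degrees add because every term of `s * t` replaces a subtree of `s` (or `t`) of degree `e` by a
tree of degree `e + deg t` (or `deg s + e`).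
-/

open Finsupp

namespace Finsupp

variable {R α : Type*} [CommSemiring R]

theorem linearCombination_single_one (x : α →₀ R) :
    linearCombination R (fun a => single a (1 : R)) x = x := by
  simp only [linearCombination_apply, smul_single_one, sum_single]

theorem linearCombination_apply_apply {M N : Type*} [AddCommMonoid M] [Module R M]
    [AddCommMonoid N] [Module R N] (v : α → M →ₗ[R] N) (x : α →₀ R) (y : M) :
    linearCombination R v x y = linearCombination R (fun a => v a y) x := by
  simp only [linearCombination_apply, LinearMap.finsupp_sum_apply, LinearMap.smul_apply]

noncomputable def bilinExt (F : α → α → α →₀ R) : (α →₀ R) →ₗ[R] (α →₀ R) →ₗ[R] α →₀ R :=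
  linearCombination R fun s => linearCombination R (F s)

variable (F : α → α → α →₀ R)

theorem bilinExt_apply (x y : α →₀ R) :
    bilinExt F x y = linearCombination R (fun s => linearCombination R (F s) y) x :=
  linearCombination_apply_apply _ x y

theorem bilinExt_apply' (x y : α →₀ R) :
    bilinExt F x y = linearCombination R (fun t => linearCombination R (fun s => F s t) x) y := by
  simp only [bilinExt_apply, linearCombination_apply, smul_sum]
  rw [sum_comm]
  exact sum_congr fun t _ => sum_congr fun s _ => smul_comm _ _ _

theorem bilinExt_single_left (s : α) (y : α →₀ R) :
    bilinExt F (single s 1) y = linearCombination R (F s) y := by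
  simp [bilinExt_apply]

theorem bilinExt_single_right (x : α →₀ R) (t : α) :
    bilinExt F x (single t 1) = linearCombination R (fun s => F s t) x := by
  simp [bilinExt_apply']

theorem bilinExt_single_single (s t : α) : bilinExt F (single s 1) (single t 1) = F s t := by
  simp [bilinExt_single_left]

theorem bilinExt_single_left_eq_self {e : α} (he : ∀ t, F e t = single t 1) (y : α →₀ R) :
    bilinExt F (single e 1) y = y := by
  rw [bilinExt_single_left, funext he, linearCombination_single_one]

theorem bilinExt_single_right_eq_self {e : α} (he : ∀ s, F s e = single s 1) (x : α →₀ R) :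
    bilinExt F x (single e 1) = x := by
  rw [bilinExt_single_right, funext he, linearCombination_single_one]

theorem assoc_of_assoc_single (B : (α →₀ R) →ₗ[R] (α →₀ R) →ₗ[R] α →₀ R)
    (h : ∀ s t u, B (B (single s 1) (single t 1)) (single u 1)
      = B (single s 1) (B (single t 1) (single u 1)))
    (x y z : α →₀ R) : B (B x y) z = B x (B y z) := by
  have : B.compr₂ B = ((LinearMap.llcomp R _ _ _).comp B).compl₂ B := by
    ext s t u v
    simp [h s t u]
  exact congr($this x y z)

end Finsupp

namespace NTree

variable {n : ℕ}

theorem deg_leaf : (leaf : NTree n).deg = 0 := rfl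

theorem deg_node_update (f : Fin n → NTree n) (i : Fin n) (v : NTree n) :
    (node (Function.update f i v)).deg + (f i).deg = (node f).deg + v.deg := by
  have key : ∀ w, (node (Function.update f i w)).deg
      = 1 + w.deg + ∑ j ∈ Finset.univ.erase i, (f j).deg := by
    intro w
    rw [deg_node, ← Finset.add_sum_erase _ _ (Finset.mem_univ i), Function.update_self, add_assoc,
      Finset.sum_congr rfl fun j hj => by rw [Function.update_of_ne (Finset.ne_of_mem_erase hj)]]
  have := key (f i)
  rw [Function.update_eq_self] at this
  rw [key v, this]
  omega

section Grafting

variable {K : Type*} [Field K]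

theorem nodeAt_eq_lmapDomain (f : Fin n → NTree n) (i : Fin n) (x : NTree n →₀ K) :
    nodeAt f i x = lmapDomain K K (fun u => node (Function.update f i u)) x := rfl

theorem nodeAt_single_self (f : Fin n → NTree n) (i : Fin n) :
    nodeAt f i (single (f i) (1 : K)) = single (node f) 1 := by
  rw [nodeAt_eq_lmapDomain, lmapDomain_apply, mapDomain_single, Function.update_eq_self]

theorem nodeAt_update_self (f : Fin n → NTree n) (i : Fin n) (v : NTree n) :
    nodeAt (K := K) (Function.update f i v) i = nodeAt f i := by
  funext x
  simp only [nodeAt_eq_lmapDomain, Function.update_idem]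

theorem nodeAt_linearCombination (f : Fin n → NTree n) (i : Fin n) (G : NTree n → NTree n →₀ K)
    (x : NTree n →₀ K) :
    nodeAt f i (linearCombination K G x) = linearCombination K (fun v => nodeAt f i (G v)) x := by
  rw [nodeAt_eq_lmapDomain, apply_linearCombination]
  rfl

theorem linearCombination_nodeAt (f : Fin n → NTree n) (i : Fin n) (G : NTree n → NTree n →₀ K)
    (x : NTree n →₀ K) :
    linearCombination K G (nodeAt f i x)
      = linearCombination K (fun v => G (node (Function.update f i v))) x :=
  linearCombination_mapDomain ..

theorem linearCombination_nodeAt_comm {i j : Fin n} (hij : i ≠ j) (f : Fin n → NTree n)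
    (x y : NTree n →₀ K) :
    linearCombination K (fun v => nodeAt (Function.update f i v) j y) x
      = linearCombination K (fun w => nodeAt (Function.update f j w) i x) y := by
  simp only [linearCombination_apply, nodeAt, smul_sum, smul_single, smul_eq_mul]
  rw [sum_comm]
  exact sum_congr fun w _ => sum_congr fun v _ => by rw [Function.update_comm hij, mul_comm]

theorem deg_of_mem_support_nodeAt {f : Fin n → NTree n} {i : Fin n} {x : NTree n →₀ K} {d : ℕ}
    (hx : ∀ v ∈ x.support, v.deg = d) :
    ∀ u ∈ (nodeAt f i x).support, u.deg + (f i).deg = (node f).deg + d := by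
  classical
  intro u hu
  rw [nodeAt_eq_lmapDomain, lmapDomain_apply] at hu
  obtain ⟨v, hv, rfl⟩ := Finset.mem_image.mp (mapDomain_support hu)
  rw [deg_node_update, hx v hv]

end Grafting

noncomputable section Dendriform

variable {K : Type*} [Field K] (m l : Fin n)

theorem mulT_leaf_left (t : NTree n) : mulT (K := K) m l leaf t = single t 1 := by
  rw [mulT]

theorem mulT_leaf_right (s : NTree n) : mulT (K := K) m l s leaf = single s 1 := by
  cases s <;> rw [mulT]

theorem mulT_node_node (f g : Fin n → NTree n) :
    mulT (K := K) m l (node f) (node g)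
      = nodeAt f m (mulT m l (f m) (node g)) + nodeAt g l (mulT m l (node f) (g l)) := by
  rw [mulT]

theorem deg_of_mem_support_mulT (s t : NTree n) :
    ∀ u ∈ (mulT (K := K) m l s t).support, u.deg = s.deg + t.deg := by
  classical
  induction s, t using mulT.induct m l with
  | case1 t => simp [mulT_leaf_left, deg_leaf]
  | case2 f => simp [mulT_leaf_right, deg_leaf]
  | case3 f g ihf ihg =>
    intro u hu
    rw [mulT_node_node] at hu
    rcases Finset.mem_union.mp (support_add hu) with hu | hu
    · have := deg_of_mem_support_nodeAt ihf u hu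
      omega
    · have := deg_of_mem_support_nodeAt ihg u hu
      omega

def precT : NTree n → NTree n → NTree n →₀ K
  | leaf, _ => 0
  | node f, t => nodeAt f m (mulT m l (f m) t)

def succT : NTree n → NTree n → NTree n →₀ K
  | _, leaf => 0
  | s, node g => nodeAt g l (mulT m l s (g l))

theorem precT_node (f : Fin n → NTree n) :
    precT (K := K) m l (node f) = fun t => nodeAt f m (mulT m l (f m) t) := rfl

theorem succT_node (s : NTree n) (g : Fin n → NTree n) :
    succT (K := K) m l s (node g) = nodeAt g l (mulT m l s (g l)) := by
  cases s <;> rfl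

theorem mulT_node_left (f : Fin n → NTree n) (t : NTree n) :
    mulT (K := K) m l (node f) t = precT m l (node f) t + succT m l (node f) t := by
  cases t with
  | leaf => rw [mulT_leaf_right, precT, mulT_leaf_right, nodeAt_single_self, succT, add_zero]
  | node g => rw [mulT_node_node, precT, succT_node]

theorem mulT_node_right (s : NTree n) (g : Fin n → NTree n) :
    mulT (K := K) m l s (node g) = precT m l s (node g) + succT m l s (node g) := by
  cases s with
  | leaf => rw [mulT_leaf_left, precT, succT_node, mulT_leaf_left, nodeAt_single_self, zero_add]
  | node f => rw [mulT_node_node, precT, succT_node]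

local infixl:70 " ⋆ " => bilinExt (mulT m l)
local infixl:70 " ≺ " => bilinExt (precT m l)
local infixl:70 " ≻ " => bilinExt (succT m l)

theorem single_leaf_star (y : NTree n →₀ K) : single leaf 1 ⋆ y = y :=
  bilinExt_single_left_eq_self _ (mulT_leaf_left m l) y

theorem star_single_leaf (x : NTree n →₀ K) : x ⋆ single leaf 1 = x :=
  bilinExt_single_right_eq_self _ (mulT_leaf_right m l) x

theorem single_node_star (f : Fin n → NTree n) (y : NTree n →₀ K) :
    single (node f) 1 ⋆ y = single (node f) 1 ≺ y + single (node f) 1 ≻ y := by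
  simp only [bilinExt_single_left, linearCombination_apply, mulT_node_left, smul_add, sum_add]

theorem star_single_node (x : NTree n →₀ K) (g : Fin n → NTree n) :
    x ⋆ single (node g) 1 = x ≺ single (node g) 1 + x ≻ single (node g) 1 := by
  simp only [bilinExt_single_right, linearCombination_apply, mulT_node_right, smul_add, sum_add]

theorem prec_nodeAt (f : Fin n → NTree n) (i : Fin n) (x z : NTree n →₀ K) :
    nodeAt f i x ≺ z = linearCombination K
      (fun v => nodeAt (Function.update f i v) m (single (Function.update f i v m) 1 ⋆ z)) x := by
  simp only [bilinExt_apply, linearCombination_nodeAt, precT_node, ← nodeAt_linearCombination,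
    linearCombination_single, one_smul]

theorem succ_nodeAt (g : Fin n → NTree n) (i : Fin n) (x z : NTree n →₀ K) :
    x ≻ nodeAt g i z = linearCombination K
      (fun w => nodeAt (Function.update g i w) l (x ⋆ single (Function.update g i w l) 1)) z := by
  simp only [bilinExt_apply', linearCombination_nodeAt, succT_node, ← nodeAt_linearCombination,
    linearCombination_single, one_smul]

theorem prec_nodeAt_self (f : Fin n → NTree n) (x z : NTree n →₀ K) :
    nodeAt f m x ≺ z = nodeAt f m (x ⋆ z) := by
  rw [prec_nodeAt, bilinExt_apply, nodeAt_linearCombination]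
  simp only [Function.update_self, nodeAt_update_self, bilinExt_single_left]

theorem succ_nodeAt_self (g : Fin n → NTree n) (x z : NTree n →₀ K) :
    x ≻ nodeAt g l z = nodeAt g l (x ⋆ z) := by
  rw [succ_nodeAt, bilinExt_apply', nodeAt_linearCombination]
  simp only [Function.update_self, nodeAt_update_self, bilinExt_single_right]

theorem single_node_prec (f : Fin n → NTree n) (z : NTree n →₀ K) :
    single (node f) 1 ≺ z = nodeAt f m (single (f m) 1 ⋆ z) := by
  rw [← nodeAt_single_self, prec_nodeAt_self]

theorem succ_single_node (x : NTree n →₀ K) (g : Fin n → NTree n) :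
    x ≻ single (node g) 1 = nodeAt g l (x ⋆ single (g l) 1) := by
  rw [← nodeAt_single_self, succ_nodeAt_self]

theorem prec_prec (f : Fin n → NTree n) (y z : NTree n →₀ K)
    (h : single (f m) 1 ⋆ y ⋆ z = single (f m) 1 ⋆ (y ⋆ z)) :
    single (node f) 1 ≺ y ≺ z = single (node f) 1 ≺ (y ⋆ z) := by
  rw [single_node_prec, prec_nodeAt_self, h, single_node_prec]

theorem succ_prec (x : NTree n →₀ K) (g : Fin n → NTree n) (z : NTree n →₀ K)
    (h : x ⋆ single (g l) 1 ⋆ z = x ⋆ (single (g l) 1 ⋆ z)) :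
    x ≻ single (node g) 1 ≺ z = x ≻ (single (node g) 1 ≺ z) := by
  rw [succ_single_node, single_node_prec]
  by_cases hml : m = l
  · subst hml
    rw [prec_nodeAt_self, succ_nodeAt_self, h]
  · rw [prec_nodeAt, succ_nodeAt]
    simp only [Function.update_of_ne hml, Function.update_of_ne (Ne.symm hml)]
    exact linearCombination_nodeAt_comm (Ne.symm hml) g _ _

theorem succ_succ (x y : NTree n →₀ K) (g : Fin n → NTree n)
    (h : x ⋆ y ⋆ single (g l) 1 = x ⋆ (y ⋆ single (g l) 1)) :
    x ⋆ y ≻ single (node g) 1 = x ≻ (y ≻ single (node g) 1) := by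
  rw [succ_single_node, succ_single_node, succ_nodeAt_self, h]

theorem star_assoc_single (s t u : NTree n) :
    single s 1 ⋆ single t 1 ⋆ single u 1 = single s (1 : K) ⋆ (single t 1 ⋆ single u 1) := by
  induction hN : s.deg + t.deg + u.deg using Nat.strong_induction_on generalizing s t u with
  | _ N ih =>
    obtain _ | f := s
    · rw [single_leaf_star, single_leaf_star]
    obtain _ | g := t
    · rw [single_leaf_star, star_single_leaf]
    obtain _ | h := u
    · rw [star_single_leaf, star_single_leaf]
    have := deg_lt f m
    have := deg_lt g l
    have := deg_lt h l
    calc single (node f) (1 : K) ⋆ single (node g) 1 ⋆ single (node h) 1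
        = single (node f) 1 ≺ single (node g) 1 ≺ single (node h) 1
          + single (node f) 1 ≻ single (node g) 1 ≺ single (node h) 1
          + single (node f) 1 ⋆ single (node g) 1 ≻ single (node h) 1 := by
          rw [star_single_node, single_node_star, map_add, LinearMap.add_apply]
      _ = single (node f) (1 : K) ≺ (single (node g) 1 ⋆ single (node h) 1)
          + single (node f) 1 ≻ (single (node g) 1 ≺ single (node h) 1)
          + single (node f) 1 ≻ (single (node g) 1 ≻ single (node h) 1) := by
          rw [prec_prec m l f _ _ (ih _ (by omega) _ _ _ rfl),
            succ_prec m l _ g _ (ih _ (by omega) _ _ _ rfl),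
            succ_succ m l _ _ h (ih _ (by omega) _ _ _ rfl)]
      _ = single (node f) 1 ⋆ (single (node g) 1 ⋆ single (node h) 1) := by
          rw [add_assoc, ← map_add, ← single_node_star, ← single_node_star]

end Dendriform

theorem star_eq_bilinExt {K : Type*} [Field K] (m l : Fin n) (x y : NTree n →₀ K) :
    star m l x y = bilinExt (mulT m l) x y := by
  rw [bilinExt_apply, linearCombination_apply]
  refine sum_congr fun s _ => ?_
  rw [linearCombination_apply, smul_sum]
  exact sum_congr fun t _ => mul_smul _ _ _

end NTree

noncomputable section
open Finsupp

theorem nary_star_associative_unital_graded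
    {K : Type*} [Field K] {n : ℕ} (m l : Fin n) :
    -- `*` on basis trees is the bilinear extension datum
    (∀ s t : NTree n,
        star m l (Finsupp.single s 1) (Finsupp.single t 1) = mulT (K := K) m l s t) ∧
    -- the single-leaf tree is a two-sided unit
    (∀ x : NTree n →₀ K, star m l (Finsupp.single NTree.leaf 1) x = x) ∧
    (∀ x : NTree n →₀ K, star m l x (Finsupp.single NTree.leaf 1) = x) ∧
    -- `*` is associative
    (∀ x y z : NTree n →₀ K, star m l (star m l x y) z = star m l x (star m l y z)) ∧
    -- `*` is graded: `s * t` is a combination of trees of degree `deg s + deg t`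
    (∀ s t : NTree n, ∀ u ∈ (mulT (K := K) m l s t).support,
        NTree.deg u = NTree.deg s + NTree.deg t) := by
  simp only [NTree.star_eq_bilinExt]
  exact ⟨bilinExt_single_single _, NTree.single_leaf_star m l, NTree.star_single_leaf m l,
    assoc_of_assoc_single _ (NTree.star_assoc_single m l), NTree.deg_of_mem_support_mulT m l⟩

end
end
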